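/- arXiv:0908.2888 — 4 statements merged into one kernel-verified Lean document; each statement's English description precedes it below -/
import Mathlib

section
/- Let (E,ρ) be a length space and P a Markov operator on bounded measurable functions given by a transition kernel. Suppose for constants α₁, α₂ > 1 and c > 0 the Harnack inequality (Pf(x))^α ≤ (Pf^α(y))·exp(αcρ(x,y)²/(α−1)) holds for all nonnegative bounded measurable f and all x,y ∈ E, both with α = α₁ and with α = α₂. Then the same inequality holds with α = α₁·α₂. -/
open MeasureTheory Filter

/-- If the dimension-free Harnack inequality holds on a length space for powers
`α₁` and `α₂`, it holds for the power `α₁ * α₂`. -/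
theorem harnack_power_mul {E : Type*} [MetricSpace E] [MeasurableSpace E]
    (P : ProbabilityTheory.Kernel E E) [ProbabilityTheory.IsMarkovKernel P]
    (hlength : ∀ x y : E, x ≠ y → ∀ s : ℝ, 0 < s → s < 1 →
      ∃ z : ℕ → E,
        Tendsto (fun n => dist x (z n)) atTop (nhds (s * dist x y)) ∧
        Tendsto (fun n => dist (z n) y) atTop (nhds ((1 - s) * dist x y)))
    (c : ℝ) (hc : 0 < c) (α₁ α₂ : ℝ) (hα₁ : 1 < α₁) (hα₂ : 1 < α₂)
    (H : ∀ α ∈ ({α₁, α₂} : Set ℝ), ∀ f : E → ℝ, Measurable f → (∀ z, 0 ≤ f z) →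
      (∃ C : ℝ, ∀ z, f z ≤ C) → ∀ x y : E,
      (∫ z, f z ∂(P x)) ^ α ≤
        (∫ z, f z ^ α ∂(P y)) * Real.exp (α * c * dist x y ^ 2 / (α - 1))) :
    ∀ f : E → ℝ, Measurable f → (∀ z, 0 ≤ f z) → (∃ C : ℝ, ∀ z, f z ≤ C) → ∀ x y : E,
      (∫ z, f z ∂(P x)) ^ (α₁ * α₂) ≤
        (∫ z, f z ^ (α₁ * α₂) ∂(P y)) *
          Real.exp ((α₁ * α₂) * c * dist x y ^ 2 / (α₁ * α₂ - 1)) := by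
  intro f hf hf0 ⟨C, hC⟩ x y
  have hα₁0 : (0:ℝ) < α₁ := lt_trans one_pos hα₁
  have hα₂0 : (0:ℝ) < α₂ := lt_trans one_pos hα₂
  have hα₁1 : (0:ℝ) < α₁ - 1 := by linarith
  have hα₂1 : (0:ℝ) < α₂ - 1 := by linarith
  have hmul1 : (1:ℝ) < α₁ * α₂ := by nlinarith
  have hmul1' : (0:ℝ) < α₁ * α₂ - 1 := by linarith
  set C' : ℝ := max C 0 with hC'def
  have hC' : ∀ z, f z ≤ C' := fun z => (hC z).trans (le_max_left _ _)
  have hI : (0:ℝ) ≤ ∫ z, f z ∂(P x) := integral_nonneg hf0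
  set R : ℝ := ∫ z, f z ^ (α₁ * α₂) ∂(P y) with hRdef
  have hR : 0 ≤ R := integral_nonneg fun z => Real.rpow_nonneg (hf0 z) _
  -- key inequality for an arbitrary intermediate point
  have key : ∀ w : E, (∫ z, f z ∂(P x)) ^ (α₁ * α₂) ≤
      R * Real.exp (α₁ * α₂ * c * dist x w ^ 2 / (α₁ - 1)
        + α₂ * c * dist w y ^ 2 / (α₂ - 1)) := by
    intro w
    have h1 := H α₁ (by simp) f hf hf0 ⟨C, hC⟩ x w
    set J : ℝ := ∫ z, f z ^ α₁ ∂(P w) with hJdef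
    have hJ : 0 ≤ J := integral_nonneg fun z => Real.rpow_nonneg (hf0 z) _
    have h1' : ((∫ z, f z ∂(P x)) ^ α₁) ^ α₂ ≤
        (J * Real.exp (α₁ * c * dist x w ^ 2 / (α₁ - 1))) ^ α₂ :=
      Real.rpow_le_rpow (Real.rpow_nonneg hI _) h1 hα₂0.le
    rw [← Real.rpow_mul hI, Real.mul_rpow hJ (Real.exp_nonneg _),
      ← Real.exp_mul] at h1'
    have h2 := H α₂ (by simp) (fun z => f z ^ α₁)
      (by measurability) (fun z => Real.rpow_nonneg (hf0 z) _)
      ⟨C' ^ α₁, fun z => Real.rpow_le_rpow (hf0 z) (hC' z) hα₁0.le⟩ w y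
    have hgg : (∫ z, (f z ^ α₁) ^ α₂ ∂(P y)) = R := by
      rw [hRdef]
      exact integral_congr_ae (Filter.Eventually.of_forall fun z =>
        (Real.rpow_mul (hf0 z) α₁ α₂).symm)
    rw [hgg] at h2
    calc (∫ z, f z ∂(P x)) ^ (α₁ * α₂)
        ≤ J ^ α₂ * Real.exp (α₁ * c * dist x w ^ 2 / (α₁ - 1) * α₂) := h1'
      _ ≤ (R * Real.exp (α₂ * c * dist w y ^ 2 / (α₂ - 1))) *
            Real.exp (α₁ * c * dist x w ^ 2 / (α₁ - 1) * α₂) :=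
          mul_le_mul_of_nonneg_right h2 (Real.exp_nonneg _)
      _ = R * Real.exp (α₁ * α₂ * c * dist x w ^ 2 / (α₁ - 1)
            + α₂ * c * dist w y ^ 2 / (α₂ - 1)) := by
          rw [mul_assoc, ← Real.exp_add]
          ring_nf
  by_cases hxy : x = y
  · subst hxy
    have := key x
    simpa using this
  · set s : ℝ := (α₁ - 1) / (α₁ * α₂ - 1) with hsdef
    have hs0 : 0 < s := div_pos hα₁1 hmul1'
    have hs1 : s < 1 := (div_lt_one hmul1').mpr (by nlinarith)
    obtain ⟨z, hz1, hz2⟩ := hlength x y hxy s hs0 hs1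
    set D : ℝ := dist x y with hDdef
    have hlim : Tendsto (fun n => R * Real.exp
        (α₁ * α₂ * c * dist x (z n) ^ 2 / (α₁ - 1)
          + α₂ * c * dist (z n) y ^ 2 / (α₂ - 1))) atTop
        (nhds (R * Real.exp (α₁ * α₂ * c * (s * D) ^ 2 / (α₁ - 1)
          + α₂ * c * ((1 - s) * D) ^ 2 / (α₂ - 1)))) := by
      apply Tendsto.const_mul
      apply (Real.continuous_exp.tendsto _).comp
      exact (((hz1.pow 2).const_mul _).div_const _).add
        (((hz2.pow 2).const_mul _).div_const _)
    have hle := ge_of_tendsto' hlim (fun n => key (z n))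
    have heq : α₁ * α₂ * c * (s * D) ^ 2 / (α₁ - 1)
        + α₂ * c * ((1 - s) * D) ^ 2 / (α₂ - 1)
        = α₁ * α₂ * c * D ^ 2 / (α₁ * α₂ - 1) := by
      rw [hsdef]
      field_simp
      ring
    rw [heq] at hle
    exact hle
end

section
/- Let P be a Markov operator on a metric space (E,ρ) satisfying, for some α > 1, the Harnack inequality (Pf(x))^β ≤ (Pf^β(y))·exp(βcρ(x,y)²/(β−1)) for all β = αⁿ (n ≥ 1), all nonnegative bounded measurable f, and all x,y ∈ E. Then the log-Harnack inequality holds: P(log f)(x) ≤ log Pf(y) + cρ(x,y)² for all bounded measurable f ≥ 1 and x,y ∈ E. -/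
open MeasureTheory Filter Real

/-- If a Markov operator satisfies the Harnack inequality with power `β = αⁿ`
for all `n ≥ 1`, then the log-Harnack inequality holds. -/
theorem log_harnack_of_harnack_powers {E : Type*} [MetricSpace E] [MeasurableSpace E]
    (P : ProbabilityTheory.Kernel E E) [ProbabilityTheory.IsMarkovKernel P]
    (c : ℝ) (hc : 0 < c) (α : ℝ) (hα : 1 < α)
    (H : ∀ n : ℕ, 1 ≤ n → ∀ f : E → ℝ, Measurable f → (∀ z, 0 ≤ f z) →
      (∃ C : ℝ, ∀ z, f z ≤ C) → ∀ x y : E,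
      (∫ z, f z ∂(P x)) ^ (α ^ n) ≤
        (∫ z, f z ^ (α ^ n) ∂(P y)) *
          Real.exp ((α ^ n) * c * dist x y ^ 2 / (α ^ n - 1))) :
    ∀ f : E → ℝ, Measurable f → (∀ z, 1 ≤ f z) → (∃ C : ℝ, ∀ z, f z ≤ C) → ∀ x y : E,
      ∫ z, Real.log (f z) ∂(P x) ≤ Real.log (∫ z, f z ∂(P y)) + c * dist x y ^ 2 := by
  rintro f hf hf1 ⟨C, hC⟩ x y
  have hC1 : (1:ℝ) ≤ C := le_trans (hf1 x) (hC x)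
  set A : ℝ := ∫ z, f z ∂(P y) with hA
  set d : ℝ := dist x y with hd
  -- f is integrable w.r.t. any of the (probability) measures
  have hfint : ∀ w : E, Integrable f (P w) := by
    intro w
    refine (integrable_const C).mono' hf.aestronglyMeasurable ?_
    filter_upwards with z
    rw [Real.norm_eq_abs, abs_of_nonneg (le_trans zero_le_one (hf1 z))]
    exact hC z
  have hA1 : (1:ℝ) ≤ A := by
    calc (1:ℝ) = ∫ _, (1:ℝ) ∂(P y) := by simp
    _ ≤ A := integral_mono (integrable_const 1) (hfint y) hf1
  have hA0 : (0:ℝ) < A := lt_of_lt_of_le zero_lt_one hA1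
  set L : ℝ := Real.log A + c * d ^ 2 with hL
  -- auxiliary function
  set G : ℝ → ℝ := fun ε => Real.exp (ε * Real.log A + c * d ^ 2 * (ε / (1 - ε))) with hG
  have hG0 : G 0 = 1 := by simp [hG]
  -- derivative of G at 0 is L
  have hGd : HasDerivAt G L 0 := by
    have h1 : HasDerivAt (fun ε : ℝ => ε / (1 - ε)) 1 0 := by
      have := (hasDerivAt_id (0:ℝ)).div ((hasDerivAt_const (0:ℝ) (1:ℝ)).sub (hasDerivAt_id 0))
        (by norm_num)
      refine this.congr_deriv ?_
      norm_num
    have h2 : HasDerivAt (fun ε : ℝ => ε * Real.log A + c * d ^ 2 * (ε / (1 - ε))) L 0 := by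
      have := ((hasDerivAt_id (0:ℝ)).mul_const (Real.log A)).add (h1.const_mul (c * d ^ 2))
      refine this.congr_deriv ?_
      simp [hL]
    have := h2.exp
    simpa [hG] using this
  -- key inequality for each n ≥ 1
  have key : ∀ n : ℕ, 1 ≤ n →
      ∫ z, Real.log (f z) ∂(P x) ≤ (G ((α ^ n)⁻¹) - 1) / (α ^ n)⁻¹ := by
    intro n hn
    set β : ℝ := α ^ n with hβ
    have hβ1 : (1:ℝ) < β := one_lt_pow₀ hα (by omega)
    have hβ0 : (0:ℝ) < β := lt_trans zero_lt_one hβ1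
    set g : E → ℝ := fun z => f z ^ (β⁻¹ : ℝ) with hg
    have hfz0 : ∀ z, (0:ℝ) < f z := fun z => lt_of_lt_of_le zero_lt_one (hf1 z)
    have hgmeas : Measurable g :=
      (Real.continuous_rpow_const (by positivity)).measurable.comp hf
    have hg0 : ∀ z, 0 ≤ g z := fun z => Real.rpow_nonneg (hfz0 z).le _
    have hg1 : ∀ z, 1 ≤ g z := fun z => Real.one_le_rpow (hf1 z) (by positivity)
    have hgC : ∀ z, g z ≤ C := fun z => by
      calc g z ≤ f z ^ (1:ℝ) :=
        Real.rpow_le_rpow_of_exponent_le (hf1 z) (by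
          rw [inv_le_one_iff₀]; right; exact hβ1.le)
      _ = f z := Real.rpow_one _
      _ ≤ C := hC z
    have harnack := H n hn g hgmeas hg0 ⟨C, hgC⟩ x y
    -- simplify ∫ g ^ β ∂(P y) = A
    have hgβ : ∀ z, g z ^ (β : ℝ) = f z := fun z =>
      Real.rpow_inv_rpow (hfz0 z).le hβ0.ne'
    rw [show (∫ z, g z ^ (α ^ n : ℝ) ∂(P y)) = A by
      rw [hA]; exact integral_congr_ae (Filter.Eventually.of_forall fun z => hgβ z)] at harnack
    set S : ℝ := ∫ z, g z ∂(P x) with hS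
    have hS0 : 0 ≤ S := integral_nonneg hg0
    -- S ≤ A ^ β⁻¹ * exp (c * d ^ 2 / (β - 1))
    have hSle : S ≤ A ^ (β⁻¹ : ℝ) * Real.exp (c * d ^ 2 / (β - 1)) := by
      have h1 : (S ^ (β:ℝ)) ^ (β⁻¹:ℝ) ≤
          ((A * Real.exp (β * c * d ^ 2 / (β - 1)))) ^ (β⁻¹:ℝ) :=
        Real.rpow_le_rpow (Real.rpow_nonneg hS0 _) harnack (by positivity)
      rw [Real.rpow_rpow_inv hS0 hβ0.ne'] at h1
      refine h1.trans_eq ?_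
      rw [Real.mul_rpow hA0.le (Real.exp_pos _).le, ← Real.exp_mul]
      congr 2
      have hne : β - 1 ≠ 0 := sub_ne_zero.mpr hβ1.ne'
      field_simp
    -- pointwise : log (f z) ≤ β * (g z - 1)
    have hpt : ∀ z, Real.log (f z) ≤ β * (g z - 1) := by
      intro z
      have h1 : β⁻¹ * Real.log (f z) + 1 ≤ Real.exp (β⁻¹ * Real.log (f z)) :=
        Real.add_one_le_exp _
      have h2 : Real.exp (β⁻¹ * Real.log (f z)) = f z ^ (β⁻¹ : ℝ) := by
        rw [Real.rpow_def_of_pos (hfz0 z), mul_comm]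
      rw [h2] at h1
      have h4 := mul_le_mul_of_nonneg_left h1 hβ0.le
      have hβinv : β * β⁻¹ = 1 := mul_inv_cancel₀ hβ0.ne'
      have h3 : β * (β⁻¹ * Real.log (f z) + 1) = Real.log (f z) + β := by
        rw [mul_add, ← mul_assoc, hβinv, one_mul, mul_one]
      rw [h3] at h4
      show Real.log (f z) ≤ β * (f z ^ (β⁻¹ : ℝ) - 1)
      linarith
    -- integrate
    have hlogint : Integrable (fun z => Real.log (f z)) (P x) := by
      refine (integrable_const (Real.log C)).mono'
        (hf.log.aestronglyMeasurable) ?_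
      filter_upwards with z
      rw [Real.norm_eq_abs, abs_of_nonneg (Real.log_nonneg (hf1 z))]
      exact Real.log_le_log (hfz0 z) (hC z)
    have hgint : Integrable g (P x) := by
      refine (integrable_const C).mono' hgmeas.aestronglyMeasurable ?_
      filter_upwards with z
      rw [Real.norm_eq_abs, abs_of_nonneg (hg0 z)]
      exact hgC z
    have hint : ∫ z, Real.log (f z) ∂(P x) ≤ ∫ z, β * (g z - 1) ∂(P x) :=
      integral_mono hlogint (((hgint.sub (integrable_const 1)).const_mul β)) fun z => hpt z
    have hval : ∫ z, β * (g z - 1) ∂(P x) = β * (S - 1) := by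
      rw [integral_const_mul, integral_sub hgint (integrable_const 1)]
      simp [hS]
    rw [hval] at hint
    refine hint.trans ?_
    -- β * (S - 1) ≤ (G β⁻¹ - 1) / β⁻¹
    have hGval : G (β⁻¹) = A ^ (β⁻¹:ℝ) * Real.exp (c * d ^ 2 / (β - 1)) := by
      rw [hG]
      simp only
      rw [Real.exp_add, Real.rpow_def_of_pos hA0]
      congr 2
      · ring
      · congr 1
        have hne : β - 1 ≠ 0 := sub_ne_zero.mpr hβ1.ne'
        have hlt : β⁻¹ < 1 := by
          rw [inv_lt_one_iff₀]; right; exact hβ1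
        have hne2 : (1:ℝ) - β⁻¹ ≠ 0 := sub_ne_zero.mpr hlt.ne'
        field_simp
    rw [hGval, div_inv_eq_mul, mul_comm]
    have := mul_le_mul_of_nonneg_left (sub_le_sub_right hSle 1) hβ0.le
    linarith
  -- pass to the limit
  have hεlim : Tendsto (fun n : ℕ => ((α ^ n)⁻¹ : ℝ)) atTop (nhds 0) := by
    simp_rw [← inv_pow]
    exact tendsto_pow_atTop_nhds_zero_of_lt_one (by positivity)
      (by rw [inv_lt_one_iff₀]; right; exact hα)
  have hεne : ∀ n : ℕ, ((α ^ n)⁻¹ : ℝ) ≠ 0 := fun n => by positivity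
  have hslope : Tendsto (fun n : ℕ => (G ((α ^ n)⁻¹) - 1) / (α ^ n)⁻¹) atTop (nhds L) := by
    have h1 : Tendsto (slope G 0) (nhdsWithin 0 {(0:ℝ)}ᶜ) (nhds L) :=
      hasDerivAt_iff_tendsto_slope.mp hGd
    have h2 : Tendsto (fun n : ℕ => ((α ^ n)⁻¹ : ℝ)) atTop (nhdsWithin 0 {(0:ℝ)}ᶜ) := by
      rw [tendsto_nhdsWithin_iff]
      exact ⟨hεlim, Filter.Eventually.of_forall fun n => hεne n⟩
    have h3 := h1.comp h2
    refine h3.congr fun n => ?_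
    simp [slope_def_field, hG0, div_eq_mul_inv, mul_comm]
  refine ge_of_tendsto hslope ?_
  filter_upwards [Filter.eventually_ge_atTop 1] with n hn
  exact key n hn
end

section
/- Let L = Δ + Z with Z C², let x be a point and f smooth positive with ∇f(x) = X and Hess_f(x) = 0. Let γ_t = exp_x[−2t∇log f(x)]. Then log P_t f(γ_t) = log f(x) + t(Lf/f − 2|∇log f|²)(x) + (t²/2)B + o(t²), where B = L²f/f − (Lf)²/f² − 4⟨∇Lf, ∇f⟩/f² + 4|∇f|²Lf/f³ − 4|∇f|⁴/f⁴ evaluated at x. -/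
open Real Asymptotics

/-- Euclidean Laplacian: sum of second derivatives in coordinate directions. -/
noncomputable def eLap {n : ℕ} (f : EuclideanSpace ℝ (Fin n) → ℝ)
    (x : EuclideanSpace ℝ (Fin n)) : ℝ :=
  ∑ i : Fin n,
    fderiv ℝ (fun y => fderiv ℝ f y (EuclideanSpace.single i 1)) x
      (EuclideanSpace.single i 1)

/-- The operator `L = Δ + Z`. -/
noncomputable def eL {n : ℕ} (Z : EuclideanSpace ℝ (Fin n) → EuclideanSpace ℝ (Fin n))
    (f : EuclideanSpace ℝ (Fin n) → ℝ) (x : EuclideanSpace ℝ (Fin n)) : ℝ :=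
  eLap f x + (inner ℝ (Z x) (gradient f x) : ℝ)

private lemma inner_gradient_fderiv' {F : Type*} [NormedAddCommGroup F]
    [InnerProductSpace ℝ F] [CompleteSpace F] (g : F → ℝ) (z v : F) :
    fderiv ℝ g z v = (inner ℝ (gradient g z) v : ℝ) := by
  rw [gradient]
  exact (InnerProductSpace.toDual_symm_apply).symm

private lemma fderiv_fst_dir' {E : Type*} [NormedAddCommGroup E] [NormedSpace ℝ E]
    (G K : ℝ × E → ℝ) (hG : Differentiable ℝ G)
    (hK : ∀ (t : ℝ) (z : E), HasDerivAt (fun s => G (s, z)) (K (t, z)) t)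
    (p : ℝ × E) : fderiv ℝ G p ((1:ℝ), (0:E)) = K p := by
  have h2 := ((hG p).hasFDerivAt).comp_hasDerivAt p.1
      ((hasDerivAt_id p.1).prodMk (hasDerivAt_const p.1 p.2))
  exact h2.unique (hK p.1 p.2)

private lemma fderiv_snd_dir' {E : Type*} [NormedAddCommGroup E] [NormedSpace ℝ E]
    (G : ℝ × E → ℝ) (hG : Differentiable ℝ G) (t : ℝ) (z v : E) :
    fderiv ℝ G (t, z) ((0:ℝ), v) = fderiv ℝ (fun y => G (t, y)) z v := by
  have h1 : HasFDerivAt (fun y => G (t, y))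
      ((fderiv ℝ G (t, z)).comp ((0 : E →L[ℝ] ℝ).prod (ContinuousLinearMap.id ℝ E))) z :=
    ((hG (t, z)).hasFDerivAt).comp z ((hasFDerivAt_const t z).prodMk (hasFDerivAt_id z))
  rw [h1.fderiv]
  simp

/-- Second-order Taylor expansion of `log P_t f(γ_t)` along the geodesic
`γ_t = exp_x[−2t ∇log f(x)]`, at a point where `∇f(x) = X` and `Hess_f(x) = 0`. -/
theorem log_Ptf_expansion {n : ℕ}
    (Z : EuclideanSpace ℝ (Fin n) → EuclideanSpace ℝ (Fin n)) (hZ : ContDiff ℝ 2 Z)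
    (P : ℝ → (EuclideanSpace ℝ (Fin n) → ℝ) → EuclideanSpace ℝ (Fin n) → ℝ)
    (f : EuclideanSpace ℝ (Fin n) → ℝ) (hf : ContDiff ℝ (⊤ : ℕ∞) f) (hf1 : ∀ z, 1 ≤ f z)
    (x X : EuclideanSpace ℝ (Fin n)) (hX : gradient f x = X)
    (hHess : fderiv ℝ (gradient f) x = 0)
    (hP0 : ∀ g : EuclideanSpace ℝ (Fin n) → ℝ, P 0 g = g)
    (hsmooth : ContDiff ℝ (⊤ : ℕ∞) (fun p : ℝ × EuclideanSpace ℝ (Fin n) => P p.1 f p.2))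
    (hsmoothL : ContDiff ℝ (⊤ : ℕ∞) (fun p : ℝ × EuclideanSpace ℝ (Fin n) => P p.1 (eL Z f) p.2))
    (hKf : ∀ (t : ℝ) (z : EuclideanSpace ℝ (Fin n)),
      HasDerivAt (fun s => P s f z) (P t (eL Z f) z) t)
    (hKLf : ∀ (t : ℝ) (z : EuclideanSpace ℝ (Fin n)),
      HasDerivAt (fun s => P s (eL Z f) z) (P t (eL Z (eL Z f)) z) t)
    (γ : ℝ → EuclideanSpace ℝ (Fin n))
    (hγ : γ = fun t => x - (2 * t) • gradient (fun z => Real.log (f z)) x) :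
    (fun t : ℝ =>
        Real.log (P t f (γ t)) -
          (Real.log (f x)
            + t * (eL Z f x / f x - 2 * (‖gradient f x‖ ^ 2 / f x ^ 2))
            + t ^ 2 / 2 *
              (eL Z (eL Z f) x / f x - (eL Z f x) ^ 2 / f x ^ 2
                - 4 * (inner ℝ (gradient (eL Z f) x) (gradient f x) : ℝ) / f x ^ 2
                + 4 * ‖gradient f x‖ ^ 2 * eL Z f x / f x ^ 3
                - 4 * ‖gradient f x‖ ^ 4 / f x ^ 4)))
      =o[nhdsWithin 0 (Set.Ioi 0)] (fun t : ℝ => t ^ 2) := by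
  have hfpos : (0:ℝ) < f x := lt_of_lt_of_le one_pos (hf1 x)
  have hfne : f x ≠ 0 := ne_of_gt hfpos
  have hGdiff : Differentiable ℝ (fun p : ℝ × EuclideanSpace ℝ (Fin n) => P p.1 f p.2) :=
    hsmooth.differentiable (by simp)
  have hHdiff : Differentiable ℝ (fun p : ℝ × EuclideanSpace ℝ (Fin n) => P p.1 (eL Z f) p.2) :=
    hsmoothL.differentiable (by simp)
  set w : EuclideanSpace ℝ (Fin n) := -((2 * (f x)⁻¹) • X) with hw
  -- γ rewritten in terms of w
  have hγw : γ = fun t : ℝ => x + t • w := by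
    have hlog : gradient (fun z => Real.log (f z)) x = (f x)⁻¹ • X := by
      have h1 : HasFDerivAt (fun z => Real.log (f z)) ((f x)⁻¹ • fderiv ℝ f x) x :=
        (Real.hasDerivAt_log hfne).comp_hasFDerivAt x (hf.differentiable (by simp) x).hasFDerivAt
      have h2 := h1.hasGradientAt.gradient
      simp only [map_smul] at h2
      rw [h2, ← hX, gradient]
    rw [hγ, hlog]
    funext t
    simp only [hw]
    module
  have hγ0 : γ 0 = x := by rw [hγw]; simp
  have hγd : ∀ t : ℝ, HasDerivAt γ w t := by
    intro t
    rw [hγw]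
    simpa using ((hasDerivAt_id t).smul_const w).const_add x
  have hφ : ∀ t : ℝ, HasDerivAt
      (fun s : ℝ => ((s, γ s) : ℝ × EuclideanSpace ℝ (Fin n))) ((1:ℝ), w) t :=
    fun t => (hasDerivAt_id t).prodMk (hγd t)
  -- directional derivative lemmas
  have hG1 := fderiv_fst_dir' (fun p : ℝ × EuclideanSpace ℝ (Fin n) => P p.1 f p.2)
      (fun p => P p.1 (eL Z f) p.2) hGdiff (fun t z => hKf t z)
  have hH1 := fderiv_fst_dir' (fun p : ℝ × EuclideanSpace ℝ (Fin n) => P p.1 (eL Z f) p.2)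
      (fun p => P p.1 (eL Z (eL Z f)) p.2) hHdiff (fun t z => hKLf t z)
  have hG2 := fderiv_snd_dir' (fun p : ℝ × EuclideanSpace ℝ (Fin n) => P p.1 f p.2) hGdiff
  have hH2 := fderiv_snd_dir' (fun p : ℝ × EuclideanSpace ℝ (Fin n) => P p.1 (eL Z f) p.2) hHdiff
  have e1 : ((1:ℝ), w) = ((1:ℝ), (0:EuclideanSpace ℝ (Fin n))) + ((0:ℝ), w) := by
    simp [Prod.ext_iff]
  -- derivative of u t = P t f (γ t)
  have huder : ∀ t : ℝ, HasDerivAt (fun s => P s f (γ s))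
      (P t (eL Z f) (γ t) +
        fderiv ℝ (fun p : ℝ × EuclideanSpace ℝ (Fin n) => P p.1 f p.2) (t, γ t) ((0:ℝ), w)) t := by
    intro t
    have h2 := ((hGdiff (t, γ t)).hasFDerivAt).comp_hasDerivAt t (hφ t)
    have h3 : fderiv ℝ (fun p : ℝ × EuclideanSpace ℝ (Fin n) => P p.1 f p.2) (t, γ t) ((1:ℝ), w)
        = P t (eL Z f) (γ t) +
          fderiv ℝ (fun p : ℝ × EuclideanSpace ℝ (Fin n) => P p.1 f p.2) (t, γ t) ((0:ℝ), w) := by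
      rw [e1, map_add, hG1 (t, γ t)]
    rw [h3] at h2
    exact h2
  -- derivative of t ↦ P t (eL Z f) (γ t) at 0
  have ha : HasDerivAt (fun t => P t (eL Z f) (γ t))
      (eL Z (eL Z f) x + fderiv ℝ (eL Z f) x w) 0 := by
    have h2 := ((hHdiff (0, γ 0)).hasFDerivAt).comp_hasDerivAt 0 (hφ 0)
    rw [hγ0] at h2
    have h3 : fderiv ℝ (fun p : ℝ × EuclideanSpace ℝ (Fin n) => P p.1 (eL Z f) p.2)
        ((0:ℝ), x) ((1:ℝ), w) = eL Z (eL Z f) x + fderiv ℝ (eL Z f) x w := by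
      rw [e1, map_add, hH1 ((0:ℝ), x), hH2 0 x w]
      simp only [hP0]
    rw [h3] at h2
    exact h2
  -- second derivative machinery for G
  have hΨc : ContDiff ℝ (⊤ : ℕ∞) (fderiv ℝ (fun p : ℝ × EuclideanSpace ℝ (Fin n) => P p.1 f p.2)) :=
    hsmooth.fderiv_right (by simp)
  have hΨd : HasFDerivAt (fderiv ℝ (fun p : ℝ × EuclideanSpace ℝ (Fin n) => P p.1 f p.2))
      (fderiv ℝ (fderiv ℝ (fun p : ℝ × EuclideanSpace ℝ (Fin n) => P p.1 f p.2)) ((0:ℝ), x))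
      ((0:ℝ), x) :=
    (hΨc.differentiable (by simp) _).hasFDerivAt
  have hsymm := second_derivative_symmetric
      (f := fun p : ℝ × EuclideanSpace ℝ (Fin n) => P p.1 f p.2)
      (fun y => (hGdiff y).hasFDerivAt) hΨd
  have hfderivf : ContDiff ℝ (⊤ : ℕ∞) (fderiv ℝ f) := hf.fderiv_right (by simp)
  have hdfw : Differentiable ℝ (fun z => fderiv ℝ f z w) := fun z =>
    ((ContinuousLinearMap.apply ℝ ℝ w).differentiable.comp (hfderivf.differentiable (by simp))) z
  have hgraddiff : Differentiable ℝ (gradient f) := fun z =>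
    (((InnerProductSpace.toDual ℝ
        (EuclideanSpace ℝ (Fin n))).symm.toContinuousLinearEquiv.toContinuousLinearMap.differentiable).comp
      (hfderivf.differentiable (by simp))) z
  have hzero : fderiv ℝ (fun z => fderiv ℝ f z w) x = 0 := by
    have hfun2 : (fun z => fderiv ℝ f z w) = fun z => (inner ℝ (gradient f z) w : ℝ) := by
      funext z; rw [inner_gradient_fderiv']
    rw [hfun2]
    ext v
    rw [fderiv_inner_apply (𝕜 := ℝ) (hgraddiff x) (differentiableAt_const w) v, hHess]
    simp
  have hfun : (fun z => fderiv ℝ (fun p : ℝ × EuclideanSpace ℝ (Fin n) => P p.1 f p.2)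
      ((0:ℝ), z) ((1:ℝ), w)) = fun z => eL Z f z + fderiv ℝ f z w := by
    funext z
    rw [e1, map_add, hG1 ((0:ℝ), z), hG2 0 z w]
    simp only [hP0]
  have hd3 : DifferentiableAt ℝ (fun z => eL Z f z + fderiv ℝ f z w) x := by
    rw [← hfun]
    exact ((ContinuousLinearMap.apply ℝ ℝ ((1:ℝ), w)).differentiable.comp
      ((hΨc.differentiable (by simp)).comp
        ((differentiable_const (0:ℝ)).prodMk differentiable_id))) x
  have heL : DifferentiableAt ℝ (eL Z f) x := by
    have h5 := hd3.fun_sub (hdfw x)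
    simpa using h5
  have hχ : HasFDerivAt (fun z : EuclideanSpace ℝ (Fin n) =>
      fderiv ℝ (fun p : ℝ × EuclideanSpace ℝ (Fin n) => P p.1 f p.2) ((0:ℝ), z))
      ((fderiv ℝ (fderiv ℝ (fun p : ℝ × EuclideanSpace ℝ (Fin n) => P p.1 f p.2)) ((0:ℝ), x)).comp
        ((0 : EuclideanSpace ℝ (Fin n) →L[ℝ] ℝ).prod (ContinuousLinearMap.id ℝ _))) x :=
    hΨd.comp x ((hasFDerivAt_const (0:ℝ) x).prodMk (hasFDerivAt_id x))
  have h3' : HasFDerivAt (fun z : EuclideanSpace ℝ (Fin n) =>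
      fderiv ℝ (fun p : ℝ × EuclideanSpace ℝ (Fin n) => P p.1 f p.2) ((0:ℝ), z) ((1:ℝ), w))
      ((ContinuousLinearMap.apply ℝ ℝ ((1:ℝ), w)).comp
        ((fderiv ℝ (fderiv ℝ (fun p : ℝ × EuclideanSpace ℝ (Fin n) => P p.1 f p.2)) ((0:ℝ), x)).comp
          ((0 : EuclideanSpace ℝ (Fin n) →L[ℝ] ℝ).prod (ContinuousLinearMap.id ℝ _)))) x :=
    (ContinuousLinearMap.apply ℝ ℝ ((1:ℝ), w)).hasFDerivAt.comp x hχ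
  have hval : fderiv ℝ (fderiv ℝ (fun p : ℝ × EuclideanSpace ℝ (Fin n) => P p.1 f p.2))
      ((0:ℝ), x) ((1:ℝ), w) ((0:ℝ), w) = fderiv ℝ (eL Z f) x w := by
    rw [hsymm ((1:ℝ), w) ((0:ℝ), w)]
    have h6 : fderiv ℝ (fun z : EuclideanSpace ℝ (Fin n) =>
        fderiv ℝ (fun p : ℝ × EuclideanSpace ℝ (Fin n) => P p.1 f p.2) ((0:ℝ), z) ((1:ℝ), w)) x w
        = fderiv ℝ (fderiv ℝ (fun p : ℝ × EuclideanSpace ℝ (Fin n) => P p.1 f p.2))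
            ((0:ℝ), x) ((0:ℝ), w) ((1:ℝ), w) := by
      rw [h3'.fderiv]
      simp
    rw [← h6, hfun, fderiv_fun_add heL (hdfw x)]
    simp [hzero]
  -- derivative of the second term of v at 0
  have hb : HasDerivAt (fun t => fderiv ℝ
      (fun p : ℝ × EuclideanSpace ℝ (Fin n) => P p.1 f p.2) (t, γ t) ((0:ℝ), w))
      (fderiv ℝ (eL Z f) x w) 0 := by
    have hΨd' : HasFDerivAt (fderiv ℝ (fun p : ℝ × EuclideanSpace ℝ (Fin n) => P p.1 f p.2))
        (fderiv ℝ (fderiv ℝ (fun p : ℝ × EuclideanSpace ℝ (Fin n) => P p.1 f p.2)) ((0:ℝ), x))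
        ((0:ℝ), γ 0) := by
      rw [hγ0]; exact hΨd
    have h1 := hΨd'.comp_hasDerivAt 0 (hφ 0)
    have h2 := (ContinuousLinearMap.apply ℝ ℝ ((0:ℝ), w)).hasFDerivAt.comp_hasDerivAt 0 h1
    have h7 : (ContinuousLinearMap.apply ℝ ℝ ((0:ℝ), w))
        (fderiv ℝ (fderiv ℝ (fun p : ℝ × EuclideanSpace ℝ (Fin n) => P p.1 f p.2))
          ((0:ℝ), x) ((1:ℝ), w)) = fderiv ℝ (eL Z f) x w := by
      rw [ContinuousLinearMap.apply_apply, hval]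
    rw [h7] at h2
    exact h2
  have hvd : HasDerivAt (fun t => P t (eL Z f) (γ t) +
      fderiv ℝ (fun p : ℝ × EuclideanSpace ℝ (Fin n) => P p.1 f p.2) (t, γ t) ((0:ℝ), w))
      (eL Z (eL Z f) x + fderiv ℝ (eL Z f) x w + fderiv ℝ (eL Z f) x w) 0 := ha.add hb
  -- values at 0
  have hu0 : P 0 f (γ 0) = f x := by rw [hγ0, hP0]
  have hv0 : P 0 (eL Z f) (γ 0) +
      fderiv ℝ (fun p : ℝ × EuclideanSpace ℝ (Fin n) => P p.1 f p.2) ((0:ℝ), γ 0) ((0:ℝ), w)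
      = eL Z f x + fderiv ℝ f x w := by
    rw [hγ0, hG2 0 x w]
    simp only [hP0]
  have hune : P 0 f (γ 0) ≠ 0 := by rw [hu0]; exact hfne
  -- derivative of V = v / u at 0
  have hVd := hvd.fun_div (huder 0) hune
  rw [hu0, hv0] at hVd
  -- continuity and positivity of u
  have hucont : ContinuousAt (fun t => P t f (γ t)) 0 := (huder 0).continuousAt
  have hupos : ∀ᶠ t in nhds (0:ℝ), 0 < P t f (γ t) := by
    have h0 : (0:ℝ) < P 0 f (γ 0) := by rw [hu0]; exact hfpos
    exact hucont.eventually (eventually_gt_nhds h0)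
  -- coefficients
  have hfw : fderiv ℝ f x w = -(2 * (f x)⁻¹) * ‖X‖ ^ 2 := by
    rw [inner_gradient_fderiv', hX, hw, inner_neg_right, real_inner_smul_right,
      real_inner_self_eq_norm_sq]
    ring
  have hLfw : fderiv ℝ (eL Z f) x w
      = -(2 * (f x)⁻¹) * (inner ℝ (gradient (eL Z f) x) X : ℝ) := by
    rw [inner_gradient_fderiv', hw, inner_neg_right, real_inner_smul_right]
    ring
  rw [hX]
  have hBeq : eL Z f x / f x - 2 * (‖X‖ ^ 2 / f x ^ 2)
      = (eL Z f x + fderiv ℝ f x w) / f x := by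
    rw [hfw]; field_simp; ring
  have hCeq : eL Z (eL Z f) x / f x - (eL Z f x) ^ 2 / f x ^ 2
        - 4 * (inner ℝ (gradient (eL Z f) x) X : ℝ) / f x ^ 2
        + 4 * ‖X‖ ^ 2 * eL Z f x / f x ^ 3
        - 4 * ‖X‖ ^ 4 / f x ^ 4
      = ((eL Z (eL Z f) x + fderiv ℝ (eL Z f) x w + fderiv ℝ (eL Z f) x w) * f x
          - (eL Z f x + fderiv ℝ f x w) * (eL Z f x + fderiv ℝ f x w)) / f x ^ 2 := by
    rw [hfw, hLfw]; field_simp; ring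
  rw [hBeq, hCeq]
  set B : ℝ := (eL Z f x + fderiv ℝ f x w) / f x with hB
  set C : ℝ := ((eL Z (eL Z f) x + fderiv ℝ (eL Z f) x w + fderiv ℝ (eL Z f) x w) * f x
      - (eL Z f x + fderiv ℝ f x w) * (eL Z f x + fderiv ℝ f x w)) / f x ^ 2 with hC
  -- littleO for the derivative
  have hVlit : (fun t : ℝ => (P t (eL Z f) (γ t) +
      fderiv ℝ (fun p : ℝ × EuclideanSpace ℝ (Fin n) => P p.1 f p.2) (t, γ t) ((0:ℝ), w)) /
        P t f (γ t) - (B + t * C)) =o[nhds 0] fun t => t := by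
    have h8 := hasDerivAt_iff_isLittleO.mp hVd
    simp only [sub_zero, smul_eq_mul] at h8
    have hV0eq : (P 0 (eL Z f) (γ 0) +
        fderiv ℝ (fun p : ℝ × EuclideanSpace ℝ (Fin n) => P p.1 f p.2) ((0:ℝ), γ 0) ((0:ℝ), w)) /
          P 0 f (γ 0) = B := by
      rw [hu0, hv0]
    rw [hV0eq] at h8
    have h9 : ∀ t : ℝ, (P t (eL Z f) (γ t) +
        fderiv ℝ (fun p : ℝ × EuclideanSpace ℝ (Fin n) => P p.1 f p.2) (t, γ t) ((0:ℝ), w)) /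
          P t f (γ t) - (B + t * C)
        = (P t (eL Z f) (γ t) +
        fderiv ℝ (fun p : ℝ × EuclideanSpace ℝ (Fin n) => P p.1 f p.2) (t, γ t) ((0:ℝ), w)) /
          P t f (γ t) - B - t * C := fun t => by ring
    refine (Asymptotics.isLittleO_congr (Filter.Eventually.of_forall h9)
      (Filter.Eventually.of_forall fun t => rfl)).mpr ?_
    exact h8
  -- main tendsto via L'Hôpital
  have htend : Filter.Tendsto (fun t : ℝ =>
      (Real.log (P t f (γ t)) - (Real.log (f x) + t * B + t ^ 2 / 2 * C)) / t ^ 2)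
      (nhdsWithin 0 (Set.Ioi 0)) (nhds 0) := by
    apply HasDerivAt.lhopital_zero_nhdsGT
      (f' := fun t : ℝ => (P t (eL Z f) (γ t) +
        fderiv ℝ (fun p : ℝ × EuclideanSpace ℝ (Fin n) => P p.1 f p.2) (t, γ t) ((0:ℝ), w)) /
          P t f (γ t) - (B + t * C))
      (g' := fun t : ℝ => 2 * t)
    · apply Filter.Eventually.filter_mono nhdsWithin_le_nhds
      filter_upwards [hupos] with t ht
      have hlog' := (huder t).log (ne_of_gt ht)
      have hpoly : HasDerivAt (fun s : ℝ => Real.log (f x) + s * B + s ^ 2 / 2 * C)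
          (B + t * C) t := by
        have p1 : HasDerivAt (fun s : ℝ => s * B) B t := by
          simpa using (hasDerivAt_id t).mul_const B
        have p2 : HasDerivAt (fun s : ℝ => s ^ 2 / 2 * C) (t * C) t := by
          have p2' := ((hasDerivAt_pow 2 t).div_const 2).mul_const C
          refine p2'.congr_deriv ?_
          push_cast
          ring
        have := ((hasDerivAt_const t (Real.log (f x))).fun_add p1).fun_add p2
        simpa using this
      exact hlog'.sub hpoly
    · exact Filter.Eventually.of_forall fun t => by simpa using hasDerivAt_pow 2 t
    · filter_upwards [self_mem_nhdsWithin] with t ht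
      have : (0:ℝ) < t := ht
      positivity
    · have hQc : ContinuousAt (fun t : ℝ =>
          Real.log (P t f (γ t)) - (Real.log (f x) + t * B + t ^ 2 / 2 * C)) 0 := by
        apply ContinuousAt.sub
        · exact ContinuousAt.comp (g := Real.log)
            (f := fun t => P t f (γ t)) (x := (0:ℝ)) (Real.continuousAt_log hune) hucont
        · fun_prop
      have h10 := hQc.tendsto.mono_left (nhdsWithin_le_nhds (s := Set.Ioi (0:ℝ)))
      simpa [hu0] using h10
    · have h12 : Filter.Tendsto (fun t : ℝ => t ^ 2) (nhdsWithin 0 (Set.Ioi 0)) (nhds 0) := by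
        have := (continuous_pow 2 (M := ℝ)).tendsto (0:ℝ)
        simpa using this.mono_left nhdsWithin_le_nhds
      exact h12
    · have h11 := (hVlit.mono (nhdsWithin_le_nhds (s := Set.Ioi (0:ℝ)))).tendsto_div_nhds_zero
      have h12 := h11.div_const 2
      have h13 : ∀ t : ℝ, ((P t (eL Z f) (γ t) +
          fderiv ℝ (fun p : ℝ × EuclideanSpace ℝ (Fin n) => P p.1 f p.2) (t, γ t) ((0:ℝ), w)) /
            P t f (γ t) - (B + t * C)) / t / 2
          = ((P t (eL Z f) (γ t) +
          fderiv ℝ (fun p : ℝ × EuclideanSpace ℝ (Fin n) => P p.1 f p.2) (t, γ t) ((0:ℝ), w)) /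
            P t f (γ t) - (B + t * C)) / (2 * t) := fun t => by
        rw [div_div, mul_comm t 2]
      have h14 := Filter.Tendsto.congr h13 h12
      have h15 : (0:ℝ) / 2 = 0 := by norm_num
      rw [h15] at h14
      exact h14
  rw [Asymptotics.isLittleO_iff_tendsto']
  · exact htend
  · filter_upwards [self_mem_nhdsWithin] with t ht h
    exact absurd h (pow_ne_zero 2 (ne_of_gt ht))
end

section
/- Suppose a Markov operator P satisfies the Harnack inequality (Pf(x))^α ≤ (Pf^α(y))·exp(Φ_α(x,y)) for all α in a set S ⊂ (1,∞) with inf S = 1, nonnegative bounded measurable f, and x,y, where Φ_α(x,y) = αKρ(x,y)²/(2(α−1)(1−e^{−2Kt})) for fixed t, K. Then letting α ↓ 1 along S gives no information, but letting α ↑ ∞ along powers yields the log-Harnack inequality P(log f)(x) ≤ log Pf(y) + Kρ(x,y)²/(2(1−e^{−2Kt})) for f ≥ 1; in particular the α-dependent constant Φ_α converges: lim_{α→∞} Φ_α(x,y) = Kρ(x,y)²/(2(1−e^{−2Kt})). -/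
open MeasureTheory Filter

private lemma integrable_of_bounds {α : Type*} [MeasurableSpace α] (μ : Measure α)
    [IsFiniteMeasure μ] {f : α → ℝ} (hm : Measurable f) {a b : ℝ}
    (h1 : ∀ z, a ≤ f z) (h2 : ∀ z, f z ≤ b) : Integrable f μ := by
  refine ⟨hm.aestronglyMeasurable, HasFiniteIntegral.of_bounded (C := max |a| |b|)
    (ae_of_all _ fun z => ?_)⟩
  rw [Real.norm_eq_abs, abs_le]
  constructor
  · calc -(max |a| |b|) ≤ -|a| := by simp
      _ ≤ a := neg_abs_le a
      _ ≤ f z := h1 z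
  · calc f z ≤ b := h2 z
      _ ≤ |b| := le_abs_self b
      _ ≤ max |a| |b| := le_max_right _ _

private lemma jensen_log {α : Type*} [MeasurableSpace α] (μ : Measure α)
    [IsProbabilityMeasure μ] {f : α → ℝ} (hm : Measurable f)
    (h1 : ∀ z, 1 ≤ f z) {B : ℝ} (hB : ∀ z, f z ≤ B) :
    ∫ z, Real.log (f z) ∂μ ≤ Real.log (∫ z, f z ∂μ) := by
  have hconc : ConcaveOn ℝ (Set.Ici (1 : ℝ)) Real.log :=
    strictConcaveOn_log_Ioi.concaveOn.subset
      (fun x hx => Set.mem_Ioi.2 (lt_of_lt_of_le one_pos (Set.mem_Ici.1 hx))) (convex_Ici 1)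
  have hcont : ContinuousOn Real.log (Set.Ici (1 : ℝ)) :=
    Real.continuousOn_log.mono (fun x hx => by
      simp only [Set.mem_compl_iff, Set.mem_singleton_iff]
      intro h; rw [h] at hx; exact absurd hx (by norm_num))
  have hfi : Integrable f μ := integrable_of_bounds μ hm h1 hB
  have hli : Integrable (Real.log ∘ f) μ := by
    refine integrable_of_bounds μ (Real.measurable_log.comp hm) (a := 0) (b := Real.log B)
      (fun z => Real.log_nonneg (h1 z)) (fun z => ?_)
    exact Real.log_le_log (lt_of_lt_of_le one_pos (h1 z)) (hB z)
  exact hconc.le_map_integral hcont isClosed_Ici (ae_of_all _ fun z => h1 z) hfi hli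
  -- `Real.log ∘ f` = `fun z => Real.log (f z)` definitionally

/-- If the Harnack inequality `(Pf(x))^α ≤ (Pf^α(y)) exp(Φ_α(x,y))` holds for
all `α > 1`, with `Φ_α(x,y) = αKρ(x,y)²/(2(α−1)(1−e^{−2Kt}))` (interpreting
`K/(1−e^{−2Kt}) = 1/(2t)` when `K = 0`), then the log-Harnack inequality
`P(log f)(x) ≤ log Pf(y) + Kρ(x,y)²/(2(1−e^{−2Kt}))` holds for `f ≥ 1`;
in particular `Φ_α(x,y) → Kρ(x,y)²/(2(1−e^{−2Kt}))` as `α → ∞`. -/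
theorem logHarnack_limit_of_harnack_family {E : Type*} [MetricSpace E] [MeasurableSpace E]
    (P : ProbabilityTheory.Kernel E E) [ProbabilityTheory.IsMarkovKernel P]
    (t K : ℝ) (ht : 0 < t)
    (H : ∀ α : ℝ, 1 < α → ∀ f : E → ℝ, Measurable f → (∀ z, 0 ≤ f z) →
      (∃ C : ℝ, ∀ z, f z ≤ C) → ∀ x y : E,
      (∫ z, f z ∂(P x)) ^ α ≤
        (∫ z, f z ^ α ∂(P y)) *
          Real.exp ((α / (α - 1)) *
            (if K = 0 then 1 / (4 * t) else K / (2 * (1 - Real.exp (-2 * K * t)))) *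
            dist x y ^ 2)) :
    (∀ f : E → ℝ, Measurable f → (∀ z, 1 ≤ f z) → (∃ C : ℝ, ∀ z, f z ≤ C) →
      ∀ x y : E,
        ∫ z, Real.log (f z) ∂(P x) ≤
          Real.log (∫ z, f z ∂(P y)) +
            (if K = 0 then 1 / (4 * t) else K / (2 * (1 - Real.exp (-2 * K * t)))) *
              dist x y ^ 2) ∧
    ∀ x y : E,
      Tendsto
        (fun α : ℝ => (α / (α - 1)) *
          (if K = 0 then 1 / (4 * t) else K / (2 * (1 - Real.exp (-2 * K * t)))) *
          dist x y ^ 2)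
        atTop
        (nhds ((if K = 0 then 1 / (4 * t) else K / (2 * (1 - Real.exp (-2 * K * t)))) *
          dist x y ^ 2)) := by
  set c : ℝ := if K = 0 then 1 / (4 * t) else K / (2 * (1 - Real.exp (-2 * K * t))) with hc
  -- Part 2 : the limit of the constants
  have hratio : Tendsto (fun α : ℝ => α / (α - 1)) atTop (nhds 1) := by
    have h1 : Tendsto (fun α : ℝ => 1 + (α - 1)⁻¹) atTop (nhds 1) := by
      have := (tendsto_inv_atTop_zero).comp
        (tendsto_atTop_add_const_right atTop (-1 : ℝ) tendsto_id)
      simpa [sub_eq_add_neg] using tendsto_const_nhds.add this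
    refine h1.congr' ?_
    filter_upwards [eventually_gt_atTop (1 : ℝ)] with α hα
    have hne : α - 1 ≠ 0 := by linarith
    field_simp
    ring
  have htend : ∀ x y : E,
      Tendsto (fun α : ℝ => (α / (α - 1)) * c * dist x y ^ 2) atTop
        (nhds (c * dist x y ^ 2)) := by
    intro x y
    have := (hratio.mul_const c).mul_const (dist x y ^ 2)
    simpa using this
  refine ⟨?_, htend⟩
  -- Part 1 : the log-Harnack inequality
  intro f hfm hf1 hCex x y
  obtain ⟨C, hC⟩ := hCex
  haveI : Nonempty E := by
    by_contra h
    rw [not_nonempty_iff] at h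
    have h1 : (P x) Set.univ = 1 := measure_univ
    rw [Set.univ_eq_empty_iff.2 h, measure_empty] at h1
    exact zero_ne_one h1
  have hC1 : (1 : ℝ) ≤ C := le_trans (hf1 (Classical.arbitrary E)) (hC _)
  have hfpos : ∀ z, (0 : ℝ) < f z := fun z => lt_of_lt_of_le one_pos (hf1 z)
  -- integrability of f and log f with respect to any P w
  have hfi : ∀ w : E, Integrable f (P w) := fun w =>
    integrable_of_bounds _ hfm hf1 hC
  -- ∫ f ∂ (P y) ≥ 1
  have hIf1 : (1 : ℝ) ≤ ∫ z, f z ∂(P y) := by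
    calc (1 : ℝ) = ∫ _, (1 : ℝ) ∂(P y) := by simp
      _ ≤ ∫ z, f z ∂(P y) :=
        integral_mono (integrable_const 1) (hfi y) (fun z => hf1 z)
  -- key inequality for each α > 1
  have key : ∀ α : ℝ, 1 < α →
      ∫ z, Real.log (f z) ∂(P x) ≤
        Real.log (∫ z, f z ∂(P y)) + (α / (α - 1)) * c * dist x y ^ 2 := by
    intro α hα
    have hα0 : (0 : ℝ) < α := by linarith
    set g : E → ℝ := fun z => f z ^ (α⁻¹ : ℝ) with hg
    have hgrw : g = fun z => Real.exp (Real.log (f z) * α⁻¹) :=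
      funext fun z => Real.rpow_def_of_pos (hfpos z) _
    have hgm : Measurable g := by
      rw [hgrw]
      exact Real.measurable_exp.comp ((Real.measurable_log.comp hfm).mul_const _)
    have hg1 : ∀ z, (1 : ℝ) ≤ g z := fun z =>
      Real.one_le_rpow (hf1 z) (by positivity)
    have hg0 : ∀ z, (0 : ℝ) ≤ g z := fun z => le_trans zero_le_one (hg1 z)
    have hgB : ∀ z, g z ≤ C ^ (α⁻¹ : ℝ) := fun z =>
      Real.rpow_le_rpow (le_of_lt (hfpos z)) (hC z) (by positivity)
    -- apply the Harnack hypothesis to g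
    have hH := H α hα g hgm hg0 ⟨C ^ (α⁻¹ : ℝ), hgB⟩ x y
    -- g ^ α = f
    have hgα : ∀ z, g z ^ α = f z := by
      intro z
      rw [hg, ← Real.rpow_mul (le_of_lt (hfpos z)), inv_mul_cancel₀ (ne_of_gt hα0),
        Real.rpow_one]
    simp only [hgα] at hH
    -- Jensen's inequality for g at P x
    have hJ : ∫ z, Real.log (g z) ∂(P x) ≤ Real.log (∫ z, g z ∂(P x)) :=
      jensen_log (P x) hgm hg1 hgB
    have hlogg : ∀ z, Real.log (g z) = α⁻¹ * Real.log (f z) := fun z =>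
      Real.log_rpow (hfpos z) _
    simp only [hlogg] at hJ
    rw [integral_const_mul] at hJ
    set L : ℝ := ∫ z, Real.log (f z) ∂(P x) with hL
    -- ∫ g ∂(P x) ≥ 1 hence positive
    have hgi : Integrable g (P x) := integrable_of_bounds _ hgm hg1 hgB
    have hIg1 : (1 : ℝ) ≤ ∫ z, g z ∂(P x) := by
      calc (1 : ℝ) = ∫ _, (1 : ℝ) ∂(P x) := by simp
        _ ≤ ∫ z, g z ∂(P x) := integral_mono (integrable_const 1) hgi hg1
    have hIgpos : (0 : ℝ) < ∫ z, g z ∂(P x) := lt_of_lt_of_le one_pos hIg1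
    -- exp L ≤ (∫ g)^α
    have h3 : Real.exp (α⁻¹ * L) ≤ ∫ z, g z ∂(P x) := by
      calc Real.exp (α⁻¹ * L) ≤ Real.exp (Real.log (∫ z, g z ∂(P x))) :=
            Real.exp_le_exp.2 hJ
        _ = ∫ z, g z ∂(P x) := Real.exp_log hIgpos
    have h2 : Real.exp L ≤ (∫ z, g z ∂(P x)) ^ α := by
      have hcancel : α⁻¹ * L * α = L := by field_simp
      calc Real.exp L = Real.exp (α⁻¹ * L) ^ α := by
            rw [← Real.exp_mul, hcancel]
        _ ≤ (∫ z, g z ∂(P x)) ^ α :=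
            Real.rpow_le_rpow (Real.exp_pos _).le h3 hα0.le
    have hfinal : Real.exp L ≤
        (∫ z, f z ∂(P y)) * Real.exp ((α / (α - 1)) * c * dist x y ^ 2) :=
      le_trans h2 hH
    have hIfpos : (0 : ℝ) < ∫ z, f z ∂(P y) := lt_of_lt_of_le one_pos hIf1
    calc L = Real.log (Real.exp L) := (Real.log_exp L).symm
      _ ≤ Real.log ((∫ z, f z ∂(P y)) * Real.exp ((α / (α - 1)) * c * dist x y ^ 2)) :=
          Real.log_le_log (Real.exp_pos L) hfinal
      _ = Real.log (∫ z, f z ∂(P y)) + (α / (α - 1)) * c * dist x y ^ 2 := by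
          rw [Real.log_mul (ne_of_gt hIfpos) (Real.exp_ne_zero _), Real.log_exp]
  -- take α → ∞
  have hb : ∫ z, Real.log (f z) ∂(P x) - Real.log (∫ z, f z ∂(P y)) ≤ c * dist x y ^ 2 := by
    refine ge_of_tendsto (htend x y) ?_
    filter_upwards [eventually_gt_atTop (1 : ℝ)] with α hα
    linarith [key α hα]
  linarith
end
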